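/- arXiv:2004.08119 — 3 statements merged into one kernel-verified Lean document; each statement's English description precedes it below -/
import Mathlib

section
/- For μ ∈ (0,1) and x ∈ {0,1}, define V(x) = ((1−2μ)/2)^x · ((2μ−1)/2)^{1−x}, i.e. V(0) = (2μ−1)/2 and V(1) = (1−2μ)/2. Then V(0) + V(1) = 0, and the pair (V, λ=0) solves the two-state ergodic Hamilton–Jacobi–Bellman system V(0) = min_{p∈[0,1]} { p(−(1−p)/2 + V(0)) + (1−p)(−p/2 + V(1)) } − λ + μ², V(1) = min_{q∈[0,1]} { (1−q)(−q/2 + V(0)) + q(−(1−q)/2 + V(1)) } − λ + (1−μ)², with the minima attained at p* = 1−μ and q* = μ. -/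
theorem stmt2 (μ : ℝ) (hμ : μ ∈ Set.Ioo (0:ℝ) 1)
    (V : Fin 2 → ℝ)
    (hV0 : V 0 = (2*μ - 1)/2) (hV1 : V 1 = (1 - 2*μ)/2) :
    V 0 + V 1 = 0 ∧
    (∀ p ∈ Set.Icc (0:ℝ) 1,
      (1-μ) * (-(1-(1-μ))/2 + V 0) + (1-(1-μ)) * (-(1-μ)/2 + V 1)
        ≤ p * (-(1-p)/2 + V 0) + (1-p) * (-p/2 + V 1)) ∧
    V 0 = ((1-μ) * (-(1-(1-μ))/2 + V 0) + (1-(1-μ)) * (-(1-μ)/2 + V 1)) - 0 + μ^2 ∧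
    (∀ q ∈ Set.Icc (0:ℝ) 1,
      (1-μ) * (-μ/2 + V 0) + μ * (-(1-μ)/2 + V 1)
        ≤ (1-q) * (-q/2 + V 0) + q * (-(1-q)/2 + V 1)) ∧
    V 1 = ((1-μ) * (-μ/2 + V 0) + μ * (-(1-μ)/2 + V 1)) - 0 + (1-μ)^2 := by
  refine ⟨by rw [hV0, hV1]; ring, ?_, by rw [hV0, hV1]; ring, ?_, by rw [hV0, hV1]; ring⟩
  · intro p hp
    rw [hV0, hV1]
    nlinarith [sq_nonneg (p - (1 - μ))]
  · intro q hq
    rw [hV0, hV1]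
    nlinarith [sq_nonneg (q - μ)]
end

section
/- Let S ≥ 1 and let ε > 0. Suppose c ∈ C¹([0,1]) with p ↦ p·c(p) convex on [0,1]. Define for stochastic matrices P ∈ 𝕊^S (rows in the probability simplex) the costs e_i(P,V) = Σ_{j=1}^S P_{ij}(c(P_{ij}) + ε log(P_{ij}) + F(i,θ) + V(j)). Then the map g: 𝕊^S → ℝ^{S×S} defined by g_{ij}(P) = ∂e_i(P,V)/∂P_{ij} = P_{ij} c'(P_{ij}) + c(P_{ij}) + ε log(P_{ij}) + ε + V(j) + F(i,θ) is diagonally strictly convex: for all P¹ ≠ P² in 𝕊^S with all entries positive, Σ_{i,j} (P¹_{ij} − P²_{ij})(g_{ij}(P¹) − g_{ij}(P²)) > 0. -/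
/-!
The terms `ε + V j + F i` cancel, so the `(i, j)` summand is `(a - b)(φ a - φ b)` with
`a = P¹ᵢⱼ`, `b = P²ᵢⱼ` and `φ p = p c'(p) + c(p) + ε log p`. Since `p ↦ p c(p)` is convex on
`[0, 1]`, its derivative `p c'(p) + c(p)` is monotone there, and `ε log` is strictly increasing,
so `φ` is strictly increasing on `(0, 1]`. Hence every summand is nonnegative, and it is positive
at an entry where `P¹` and `P²` differ.
-/

open Set

theorem ConvexOn.monotoneOn_of_hasDerivWithinAt {S : Set ℝ} {f f' : ℝ → ℝ}
    (hfc : ConvexOn ℝ S f) (hf : ∀ x ∈ S, HasDerivWithinAt f (f' x) S x) :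
    MonotoneOn f' S := by
  intro x hx y hy hxy
  rcases eq_or_lt_of_le hxy with rfl | hxy'
  · rfl
  exact (hfc.le_slope_of_hasDerivWithinAt hx hy hxy' (hf x hx)).trans
    (hfc.slope_le_of_hasDerivWithinAt hx hy hxy' (hf y hy))

theorem StrictMonoOn.sub_mul_sub_pos {s : Set ℝ} {f : ℝ → ℝ} (hf : StrictMonoOn f s)
    {a b : ℝ} (ha : a ∈ s) (hb : b ∈ s) (hab : a ≠ b) : 0 < (a - b) * (f a - f b) := by
  rcases hab.lt_or_gt with h | h
  · exact mul_pos_of_neg_of_neg (sub_neg.2 h) (sub_neg.2 (hf ha hb h))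
  · exact mul_pos (sub_pos.2 h) (sub_pos.2 (hf hb ha h))

theorem StrictMonoOn.sub_mul_sub_nonneg {s : Set ℝ} {f : ℝ → ℝ} (hf : StrictMonoOn f s)
    {a b : ℝ} (ha : a ∈ s) (hb : b ∈ s) : 0 ≤ (a - b) * (f a - f b) := by
  rcases eq_or_ne a b with rfl | hab
  · simp
  · exact (hf.sub_mul_sub_pos ha hb hab).le

theorem StrictMonoOn.sum_sub_mul_sub_pos {ι : Type*} [Fintype ι] {s : Set ℝ} {f : ℝ → ℝ}
    (hf : StrictMonoOn f s) {x y : ι → ℝ} (hx : ∀ i, x i ∈ s) (hy : ∀ i, y i ∈ s)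
    (hxy : x ≠ y) : 0 < ∑ i, (x i - y i) * (f (x i) - f (y i)) := by
  obtain ⟨i, hi⟩ := Function.ne_iff.1 hxy
  exact Finset.sum_pos' (fun j _ => hf.sub_mul_sub_nonneg (hx j) (hy j))
    ⟨i, Finset.mem_univ i, hf.sub_mul_sub_pos (hx i) (hy i) hi⟩

theorem mem_Ioc_of_pos_of_sum_eq_one {ι : Type*} [Fintype ι] {p : ι → ℝ}
    (hpos : ∀ j, 0 < p j) (hsum : ∑ j, p j = 1) (j : ι) : p j ∈ Ioc 0 1 :=
  ⟨hpos j, hsum ▸ Finset.single_le_sum (fun k _ => (hpos k).le) (Finset.mem_univ j)⟩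

theorem monotoneOn_marginal_cost {c c' : ℝ → ℝ}
    (hc : ∀ p ∈ Icc (0:ℝ) 1, HasDerivWithinAt c (c' p) (Icc (0:ℝ) 1) p)
    (hconv : ConvexOn ℝ (Icc (0:ℝ) 1) (fun p => p * c p)) :
    MonotoneOn (fun p => p * c' p + c p) (Icc 0 1) :=
  hconv.monotoneOn_of_hasDerivWithinAt fun p hp =>
    ((hasDerivWithinAt_id p _).mul (hc p hp)).congr_deriv (by simp only [id]; ring)

theorem strictMonoOn_marginal_cost_add_log {c c' : ℝ → ℝ} {ε : ℝ} (hε : 0 < ε)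
    (hc : ∀ p ∈ Icc (0:ℝ) 1, HasDerivWithinAt c (c' p) (Icc (0:ℝ) 1) p)
    (hconv : ConvexOn ℝ (Icc (0:ℝ) 1) (fun p => p * c p)) :
    StrictMonoOn (fun p => p * c' p + c p + ε * Real.log p) (Ioc 0 1) := by
  have hlog : StrictMonoOn (fun p => ε * Real.log p) (Ioc 0 1) := fun a ha b hb hab =>
    mul_lt_mul_of_pos_left (Real.strictMonoOn_log ha.1 hb.1 hab) hε
  exact hlog.add_monotone ((monotoneOn_marginal_cost hc hconv).mono Ioc_subset_Icc_self)
    |>.congr fun p _ => add_comm _ _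

theorem stmt6_general (S : ℕ) (ε : ℝ) (hε : 0 < ε)
    (c c' : ℝ → ℝ)
    (hc : ∀ p ∈ Set.Icc (0:ℝ) 1, HasDerivWithinAt c (c' p) (Set.Icc (0:ℝ) 1) p)
    (hconv : ConvexOn ℝ (Set.Icc (0:ℝ) 1) (fun p => p * c p))
    (V : Fin S → ℝ) (F : Fin S → ℝ)
    (P₁ P₂ : Fin S → Fin S → ℝ)
    (hP₁pos : ∀ i j, 0 < P₁ i j) (hP₁row : ∀ i, ∑ j, P₁ i j = 1)
    (hP₂pos : ∀ i j, 0 < P₂ i j) (hP₂row : ∀ i, ∑ j, P₂ i j = 1)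
    (hne : P₁ ≠ P₂) :
    0 < ∑ i, ∑ j,
      (P₁ i j - P₂ i j) *
        ((P₁ i j * c' (P₁ i j) + c (P₁ i j) + ε * Real.log (P₁ i j) + ε + V j + F i)
          - (P₂ i j * c' (P₂ i j) + c (P₂ i j) + ε * Real.log (P₂ i j) + ε + V j + F i)) := by
  have key := (strictMonoOn_marginal_cost_add_log hε hc hconv).sum_sub_mul_sub_pos
    (x := Function.uncurry P₁) (y := Function.uncurry P₂)
    (fun ij => mem_Ioc_of_pos_of_sum_eq_one (hP₁pos ij.1) (hP₁row ij.1) ij.2)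
    (fun ij => mem_Ioc_of_pos_of_sum_eq_one (hP₂pos ij.1) (hP₂row ij.1) ij.2)
    (Function.uncurry_injective.ne hne)
  rw [← Fintype.sum_prod_type']
  refine key.trans_eq (Finset.sum_congr rfl ?_)
  rintro ⟨i, j⟩ -
  simp only [Function.uncurry_apply_pair]
  ring

theorem stmt6 (S : ℕ) (hS : 1 ≤ S) (ε : ℝ) (hε : 0 < ε)
    (c c' : ℝ → ℝ)
    (hc : ∀ p ∈ Set.Icc (0:ℝ) 1, HasDerivWithinAt c (c' p) (Set.Icc (0:ℝ) 1) p)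
    (hconv : ConvexOn ℝ (Set.Icc (0:ℝ) 1) (fun p => p * c p))
    (V : Fin S → ℝ) (F : Fin S → ℝ)
    (P₁ P₂ : Fin S → Fin S → ℝ)
    (hP₁pos : ∀ i j, 0 < P₁ i j) (hP₁row : ∀ i, ∑ j, P₁ i j = 1)
    (hP₂pos : ∀ i j, 0 < P₂ i j) (hP₂row : ∀ i, ∑ j, P₂ i j = 1)
    (hne : P₁ ≠ P₂) :
    0 < ∑ i, ∑ j,
      (P₁ i j - P₂ i j) *
        ((P₁ i j * c' (P₁ i j) + c (P₁ i j) + ε * Real.log (P₁ i j) + ε + V j + F i)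
          - (P₂ i j * c' (P₂ i j) + c (P₂ i j) + ε * Real.log (P₂ i j) + ε + V j + F i)) :=
  stmt6_general S ε hε c c' hc hconv V F P₁ P₂ hP₁pos hP₁row hP₂pos hP₂row hne
end

section
/- Let (V, λ) with V ∈ ℝ², V(0)+V(1) = 0, solve the two-state ergodic HJB system with ε = 0, cost c(p) = −(1−p)/2 and coupling (θ², (1−θ)²) for some θ ∈ (0,1): V(0) = min_{p∈[0,1]}{p(−(1−p)/2 + V(0)) + (1−p)(−p/2 + V(1))} − λ + θ², V(1) = min_{q∈[0,1]}{(1−q)(−q/2 + V(0)) + q(−(1−q)/2 + V(1))} − λ + (1−θ)². Then necessarily λ = 0, V(0) = (2θ−1)/2, V(1) = (1−2θ)/2, and the optimal controls are p = 1−θ, q = θ; the invariant distribution of the induced transition matrix is the Bernoulli distribution with parameter θ. -/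
theorem stmt16 (θ : ℝ) (hθ : θ ∈ Set.Ioo (0:ℝ) 1)
    (V : Fin 2 → ℝ) (lam : ℝ) (hVsum : V 0 + V 1 = 0)
    (h0 : V 0 = sInf ((fun p => p * (-(1-p)/2 + V 0) + (1-p) * (-p/2 + V 1)) ''
      Set.Icc (0:ℝ) 1) - lam + θ^2)
    (h1 : V 1 = sInf ((fun q => (1-q) * (-q/2 + V 0) + q * (-(1-q)/2 + V 1)) ''
      Set.Icc (0:ℝ) 1) - lam + (1-θ)^2) :
    lam = 0 ∧ V 0 = (2*θ-1)/2 ∧ V 1 = (1-2*θ)/2 ∧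
    (∀ p ∈ Set.Icc (0:ℝ) 1,
      (1-θ) * (-(1-(1-θ))/2 + V 0) + (1-(1-θ)) * (-(1-θ)/2 + V 1)
        ≤ p * (-(1-p)/2 + V 0) + (1-p) * (-p/2 + V 1)) ∧
    (∀ q ∈ Set.Icc (0:ℝ) 1,
      (1-θ) * (-θ/2 + V 0) + θ * (-(1-θ)/2 + V 1)
        ≤ (1-q) * (-q/2 + V 0) + q * (-(1-q)/2 + V 1)) ∧
    ((1-θ) = (1-θ)*(1-θ) + (1-θ)*θ ∧ θ = θ*(1-θ) + θ*θ) := by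
  obtain ⟨hθ0, hθ1⟩ := hθ
  set f : ℝ → ℝ := fun p => p * (-(1-p)/2 + V 0) + (1-p) * (-p/2 + V 1) with hf
  set g : ℝ → ℝ := fun q => (1-q) * (-q/2 + V 0) + q * (-(1-q)/2 + V 1) with hg
  have hgf : g = fun q => f (1 - q) := by funext q; simp only [hf, hg]; ring
  have himg : g '' Set.Icc (0:ℝ) 1 = f '' Set.Icc (0:ℝ) 1 := by
    rw [hgf, ← Set.image_image f (fun q => 1 - q)]
    rw [Set.image_const_sub_Icc]
    norm_num
  rw [himg] at h1
  have hV0 : V 0 = (2*θ-1)/2 := by nlinarith [h0, h1, hVsum]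
  have hV1 : V 1 = (1-2*θ)/2 := by linarith
  have hmem : (1-θ) ∈ Set.Icc (0:ℝ) 1 := ⟨by linarith, by linarith⟩
  have hbdd : ∀ y ∈ f '' Set.Icc (0:ℝ) 1, f (1-θ) ≤ y := by
    rintro y ⟨p, ⟨hp0, hp1⟩, rfl⟩
    simp only [hf]
    nlinarith [sq_nonneg (p - (1-θ))]
  have hinf : sInf (f '' Set.Icc (0:ℝ) 1) = f (1-θ) := by
    apply le_antisymm
    · exact csInf_le ⟨f (1-θ), hbdd⟩ ⟨1-θ, hmem, rfl⟩
    · exact le_csInf ⟨f (1-θ), 1-θ, hmem, rfl⟩ hbdd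
  rw [hinf] at h0
  simp only [hf] at h0
  have hlam : lam = 0 := by nlinarith [h0]
  refine ⟨hlam, hV0, hV1, ?_, ?_, by ring, by ring⟩
  · rintro p ⟨hp0, hp1⟩
    nlinarith [sq_nonneg (p - (1-θ))]
  · rintro q ⟨hq0, hq1⟩
    nlinarith [sq_nonneg (q - θ)]
end
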